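/- arXiv:1402.0347 — 7 statements merged into one kernel-verified Lean document; each statement's English description precedes it below -/
import Mathlib

section
/- Let n be a positive real number and ε a nonzero real constant. Define C = (-8ε(n+1)(n+2)(n+4)(3n+4))^(1/n) (assuming the argument of the n-th root is positive) and u(t,x) = C·(n x)^(-4/n) for x > 0. Then u satisfies the fifth-order KdV equation u_t + u^n u_x + ε u_{xxxxx} = 0 on the domain x > 0. -/
/-!
The profile is a power law `C (n x)^p` with `p = -4/n`, independent of `t`. Since `u^n` is then a
multiple of `(n x)^(-4)`, both `u^n u_x` and `u_{xxxxx}` are multiples of `(n x)^(p-5)`, and the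
equation reduces to an identity between their coefficients, which fixes `C^n`.
-/

open Polynomial

lemma iteratedDeriv_const_mul_rpow_const_mul {a x : ℝ} (ha : 0 < a) (hx : 0 < x) (c p : ℝ)
    (k : ℕ) :
    iteratedDeriv k (fun y => c * (a * y) ^ p) x
      = c * (descPochhammer ℝ k).eval p * a ^ k * (a * x) ^ (p - k) := by
  have hnear : (fun y => c * (a * y) ^ p) =ᶠ[nhds x] fun y => c * a ^ p * y ^ p :=
    Filter.eventuallyEq_of_mem (isOpen_Ioi.mem_nhds hx) fun y (hy : 0 < y) => by
      rw [Real.mul_rpow ha.le hy.le, mul_assoc]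
  rw [hnear.iteratedDeriv_eq, iteratedDeriv_const_mul_field, iteratedDeriv_eq_iterate,
    Real.iter_deriv_rpow_const, Real.mul_rpow ha.le hx.le, ← Real.rpow_natCast a k]
  have hsplit : a ^ p = a ^ (k : ℝ) * a ^ (p - k) := by
    rw [← Real.rpow_add ha, add_sub_cancel]
  rw [hsplit]
  ring

lemma rpow_one_div_mul_rpow_div_rpow_self {A y : ℝ} (hA : 0 ≤ A) (hy : 0 ≤ y) {n : ℝ}
    (hn : n ≠ 0) (q : ℝ) :
    (A ^ (1 / n) * y ^ (q / n)) ^ n = A * y ^ q := by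
  rw [Real.mul_rpow (Real.rpow_nonneg hA _) (Real.rpow_nonneg hy _), ← Real.rpow_mul hA,
    ← Real.rpow_mul hy, one_div_mul_cancel hn, div_mul_cancel₀ q hn, Real.rpow_one]

lemma descPochhammer_eval_five_neg_four_div {n : ℝ} (hn : n ≠ 0) :
    (descPochhammer ℝ 5).eval (-4 / n) * n ^ 5
      = -32 * (n + 1) * (n + 2) * (n + 4) * (3 * n + 4) := by
  simp only [descPochhammer_eval_eq_prod_range, Finset.prod_range_succ, Finset.prod_range_zero]
  field_simp
  ring

theorem stmt_0_general (n ε : ℝ) (hn : 0 < n)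
    (hpos : 0 < -8 * ε * (n + 1) * (n + 2) * (n + 4) * (3 * n + 4))
    (u : ℝ → ℝ → ℝ)
    (hu : ∀ t x : ℝ, u t x =
      (-8 * ε * (n + 1) * (n + 2) * (n + 4) * (3 * n + 4)) ^ (1 / n) * (n * x) ^ (-4 / n)) :
    ∀ t x : ℝ, 0 < x →
      deriv (fun s => u s x) t + (u t x) ^ n * deriv (fun y => u t y) x
        + ε * iteratedDeriv 5 (fun y => u t y) x = 0 := by
  intro t x hx
  set A := -8 * ε * (n + 1) * (n + 2) * (n + 4) * (3 * n + 4)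
  have hnx : 0 < n * x := mul_pos hn hx
  have hsteady : (fun s => u s x) = fun _ => A ^ (1 / n) * (n * x) ^ (-4 / n) := funext (hu · x)
  have hprofile : (fun y => u t y) = fun y => A ^ (1 / n) * (n * y) ^ (-4 / n) := funext (hu t)
  have hpow : u t x ^ n = A * (n * x) ^ (-4 : ℝ) := by
    rw [hu, rpow_one_div_mul_rpow_div_rpow_self hpos.le hnx.le hn.ne']
  have hmul : (n * x) ^ (-4 : ℝ) * (n * x) ^ (-4 / n - 1) = (n * x) ^ (-4 / n - 5) := by
    rw [← Real.rpow_add hnx]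
    ring_nf
  rw [hsteady, deriv_const, hpow, hprofile, ← iteratedDeriv_one,
    iteratedDeriv_const_mul_rpow_const_mul hn hx, iteratedDeriv_const_mul_rpow_const_mul hn hx,
    descPochhammer_one, eval_X]
  push_cast
  have hexp : -4 / n * n = -4 := div_mul_cancel₀ _ hn.ne'
  -- the coefficients of `(n x)^(p-5)` are `-4 A` and `-32 ε (n+1)(n+2)(n+4)(3n+4)`, which cancel
  linear_combination A * A ^ (1 / n) * (-4 / n) * n * hmul
    + A * A ^ (1 / n) * (n * x) ^ (-4 / n - 5) * hexp
    + ε * A ^ (1 / n) * (n * x) ^ (-4 / n - 5) * descPochhammer_eval_five_neg_four_div hn.ne'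

/-- Stationary solution of the constant-coefficient fifth-order KdV equation
    `u_t + u^n u_x + ε u_{xxxxx} = 0` on the domain `x > 0`. -/
theorem stmt_0 (n ε : ℝ) (hn : 0 < n) (hε : ε ≠ 0)
    (hpos : 0 < -8 * ε * (n + 1) * (n + 2) * (n + 4) * (3 * n + 4))
    (u : ℝ → ℝ → ℝ)
    (hu : ∀ t x : ℝ, u t x =
      (-8 * ε * (n + 1) * (n + 2) * (n + 4) * (3 * n + 4)) ^ (1 / n) * (n * x) ^ (-4 / n)) :
    ∀ t x : ℝ, 0 < x →
      deriv (fun s => u s x) t + (u t x) ^ n * deriv (fun y => u t y) x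
        + ε * iteratedDeriv 5 (fun y => u t y) x = 0 :=
  stmt_0_general n ε hn hpos u hu
end

section
/- Let ε < 0 be a real constant. Then the function u(t,x) = 2√(-10ε)·(3·tanh(x + 24εt)² − 2) satisfies the equation u_t + u² u_x + ε u_{xxxxx} = 0 for all (t,x) ∈ ℝ². -/
/-!
Since `tanh' = 1 - tanh²`, every derivative of `y ↦ p (tanh y)`, for a polynomial `p`, is again a
polynomial in `tanh y`, obtained by iterating `p ↦ p' · (1 - X²)`. The travelling wave is such a
polynomial in `T = tanh (x + 24 ε t)`, so the equation becomes a polynomial identity in `T`, which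
holds once `√(-10 ε)² = -10 ε`.
-/

open Polynomial Real

theorem Real.hasDerivAt_tanh (x : ℝ) : HasDerivAt tanh (1 - tanh x ^ 2) x := by
  have h := (hasDerivAt_sinh x).div (hasDerivAt_cosh x) (cosh_pos x).ne'
  have htanh : tanh = sinh / cosh := _root_.funext tanh_eq_sinh_div_cosh
  rw [htanh]
  refine h.congr_deriv ?_
  rw [Pi.div_apply]
  field_simp

namespace Polynomial

noncomputable def tanhDeriv (p : ℝ[X]) : ℝ[X] := derivative p * (1 - X ^ 2)

theorem hasDerivAt_eval_tanh (p : ℝ[X]) (x : ℝ) :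
    HasDerivAt (fun y => p.eval (tanh y)) ((tanhDeriv p).eval (tanh x)) x :=
  ((p.hasDerivAt (tanh x)).comp x (hasDerivAt_tanh x)).congr_deriv (by simp [tanhDeriv])

theorem deriv_eval_tanh_add (p : ℝ[X]) (c : ℝ) :
    deriv (fun y => p.eval (tanh (y + c))) = fun y => (tanhDeriv p).eval (tanh (y + c)) :=
  _root_.funext fun y => ((hasDerivAt_eval_tanh p (y + c)).comp_add_const y c).deriv

theorem iteratedDeriv_eval_tanh_add (n : ℕ) (p : ℝ[X]) (c : ℝ) :
    iteratedDeriv n (fun y => p.eval (tanh (y + c))) =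
      fun y => (tanhDeriv^[n] p).eval (tanh (y + c)) := by
  induction n with
  | zero => rfl
  | succ n ih => rw [iteratedDeriv_succ, ih, deriv_eval_tanh_add, Function.iterate_succ_apply']

theorem hasDerivAt_eval_tanh_const_add_mul (p : ℝ[X]) (x a t : ℝ) :
    HasDerivAt (fun s => p.eval (tanh (x + a * s)))
      ((tanhDeriv p).eval (tanh (x + a * t)) * a) t := by
  have hlin : HasDerivAt (fun s => x + a * s) a t := by
    simpa using ((hasDerivAt_id t).const_mul a).const_add x
  exact (hasDerivAt_eval_tanh p (x + a * t)).comp t hlin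

end Polynomial

noncomputable def kdvProfile (A : ℝ) : ℝ[X] := C (2 * A) * (3 * X ^ 2 - 2)

theorem kdvProfile_residual_eq_zero (ε A T : ℝ) (hA : A ^ 2 = -10 * ε) :
    (tanhDeriv (kdvProfile A)).eval T * (24 * ε)
      + (kdvProfile A).eval T ^ 2 * (tanhDeriv (kdvProfile A)).eval T
      + ε * (tanhDeriv^[5] (kdvProfile A)).eval T = 0 := by
  simp only [kdvProfile, tanhDeriv, Function.iterate_succ_apply', Function.iterate_zero_apply, map_mul,
    derivative_mul, derivative_C, derivative_sub, derivative_neg, derivative_ofNat,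
    derivative_one, derivative_X, derivative_X_pow_succ, Nat.cast_one, map_add, map_one, pow_one,
    zero_mul, mul_zero, mul_one, add_zero, zero_add, sub_zero, zero_sub, mul_neg, neg_add_rev,
    neg_zero, eval_mul, eval_C, eval_ofNat, eval_add, eval_one, eval_X, eval_sub, eval_pow, eval_neg]
  linear_combination (48 * A * (T - T ^ 3) * (3 * T ^ 2 - 2) ^ 2) * hA

/-- Travelling-wave solution (with `+` sign) of `u_t + u² u_x + ε u_{xxxxx} = 0`, `ε < 0`. -/
theorem stmt_1 (ε : ℝ) (hε : ε < 0)
    (u : ℝ → ℝ → ℝ)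
    (hu : ∀ t x : ℝ, u t x =
      2 * Real.sqrt (-10 * ε) * (3 * (Real.tanh (x + 24 * ε * t)) ^ 2 - 2)) :
    ∀ t x : ℝ,
      deriv (fun s => u s x) t + (u t x) ^ 2 * deriv (fun y => u t y) x
        + ε * iteratedDeriv 5 (fun y => u t y) x = 0 := by
  intro t x
  set A := √(-10 * ε)
  have hA : A ^ 2 = -10 * ε := sq_sqrt (by linarith)
  have hu_eval : ∀ s y, u s y = (kdvProfile A).eval (tanh (y + 24 * ε * s)) := by
    intro s y
    simp [hu, kdvProfile, A]
  have hspace : (fun y => u t y) = fun y => (kdvProfile A).eval (tanh (y + 24 * ε * t)) :=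
    _root_.funext (hu_eval t)
  have htime : HasDerivAt (fun s => u s x)
      ((tanhDeriv (kdvProfile A)).eval (tanh (x + 24 * ε * t)) * (24 * ε)) t := by
    simp only [hu_eval]
    exact hasDerivAt_eval_tanh_const_add_mul _ x (24 * ε) t
  rw [htime.deriv, hspace, deriv_eval_tanh_add, iteratedDeriv_eval_tanh_add, hu_eval]
  exact kdvProfile_residual_eq_zero ε A _ hA
end

section
/- Let u: ℝ² → ℝ be a smooth solution of u_t + u^n u_x + α(t)u + β(t) u_{xxxxx} = 0 with α smooth and nonvanishing, β smooth, and n > 0. Let A(t) be an antiderivative of α and T(t) an antiderivative of e^{−nA(t)} (so T is strictly increasing and invertible onto its range). Define ũ(t̃, x) = e^{A(t)}·u(t, x) where t = T⁻¹(t̃), and β̃(t̃) = e^{nA(t)}·β(t) with t = T⁻¹(t̃). Then ũ satisfies ũ_{t̃} + ũ^n ũ_x + β̃(t̃) ũ_{xxxxx} = 0. -/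
open Real Set Filter Topology

lemma pos_mul_rpow (c z y : ℝ) (hc : 0 < c) : (c * z) ^ y = c ^ y * z ^ y := by
  rcases lt_trichotomy z 0 with h | h | h
  · rw [Real.rpow_def_of_neg (mul_neg_of_pos_of_neg hc h), Real.rpow_def_of_neg h,
      Real.rpow_def_of_pos hc, Real.log_mul hc.ne' h.ne, add_mul, Real.exp_add]
    ring
  · subst h
    rcases eq_or_ne y 0 with hy | hy
    · simp [hy]
    · simp [Real.zero_rpow hy]
  · exact Real.mul_rpow hc.le h.le

lemma iteratedDeriv_cmul {i : ℕ} {f : ℝ → ℝ} (hf : ContDiff ℝ i f) (c x : ℝ) :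
    iteratedDeriv i (fun y => c * f y) x = c * iteratedDeriv i f x := by
  have h : (fun y => c * f y) = c • f := by funext y; simp
  rw [h, iteratedDeriv_eq_iteratedFDeriv, iteratedDeriv_eq_iteratedFDeriv,
    iteratedFDeriv_const_smul_apply hf.contDiffAt]
  simp


/-- The gauging transformation `t̃ = ∫ e^{−n∫α}, x̃ = x, ũ = e^{∫α} u` maps solutions of
    `u_t + u^n u_x + α(t)u + β(t) u_{xxxxx} = 0` to solutions of
    `ũ_t̃ + ũ^n ũ_x + β̃(t̃) ũ_{xxxxx} = 0` with `β̃(T(t)) = e^{nA(t)} β(t)`. -/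
theorem stmt_4 (n : ℝ) (hn : 0 < n)
    (α β : ℝ → ℝ) (hα : ContDiff ℝ (⊤ : ℕ∞) α) (hα0 : ∀ t, α t ≠ 0) (hβ : ContDiff ℝ (⊤ : ℕ∞) β)
    (A T : ℝ → ℝ)
    (hA : ∀ t, HasDerivAt A (α t) t)
    (hT : ∀ t, HasDerivAt T (Real.exp (-n * A t)) t)
    (u : ℝ → ℝ → ℝ) (hu : ContDiff ℝ (⊤ : ℕ∞) (fun p : ℝ × ℝ => u p.1 p.2))
    (hsol : ∀ t x : ℝ,
      deriv (fun s => u s x) t + (u t x) ^ n * deriv (fun y => u t y) x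
        + α t * u t x + β t * iteratedDeriv 5 (fun y => u t y) x = 0)
    (v : ℝ → ℝ → ℝ) (γ : ℝ → ℝ)
    (hv : ∀ t x : ℝ, v (T t) x = Real.exp (A t) * u t x)
    (hγ : ∀ t : ℝ, γ (T t) = Real.exp (n * A t) * β t) :
    ∀ t x : ℝ,
      deriv (fun s => v s x) (T t) + (v (T t) x) ^ n * deriv (fun y => v (T t) y) x
        + γ (T t) * iteratedDeriv 5 (fun y => v (T t) y) x = 0 := by
  intro t x
  -- T is strictly monotone
  have hTmono : StrictMono T := by
    apply strictMono_of_deriv_pos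
    intro s
    rw [(hT s).deriv]
    exact Real.exp_pos _
  have hTinj : Function.Injective T := hTmono.injective
  set S : ℝ → ℝ := Function.invFun T with hSdef
  have hST : ∀ s, S (T s) = s := fun s => Function.leftInverse_invFun hTinj s
  -- the interval around T t contained in the range of T
  have hle : (t - 1 : ℝ) ≤ t + 1 := by linarith
  have hTcont : ContinuousOn T (Icc (t - 1) (t + 1)) :=
    fun s _ => ((hT s).continuousAt).continuousWithinAt
  have hIVT := intermediate_value_Ioo hle hTcont
  have hmemIoo : T t ∈ Ioo (T (t - 1)) (T (t + 1)) :=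
    ⟨hTmono (by linarith), hTmono (by linarith)⟩
  have hs₀ : Ioo (T (t - 1)) (T (t + 1)) ∈ 𝓝 (T t) := isOpen_Ioo.mem_nhds hmemIoo
  have hpre : ∀ y ∈ Ioo (T (t - 1)) (T (t + 1)), ∃ s ∈ Ioo (t - 1) (t + 1), T s = y := by
    intro y hy
    obtain ⟨s, hs, hTs⟩ := hIVT hy
    exact ⟨s, hs, hTs⟩
  have hTS : ∀ᶠ y in 𝓝 (T t), T (S y) = y := by
    filter_upwards [hs₀] with y hy
    obtain ⟨s, _, hTs⟩ := hpre y hy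
    rw [← hTs, hST]
  -- continuity of S at T t
  have hcontS : ContinuousAt S (T t) := by
    have hmonoS : MonotoneOn S (Ioo (T (t - 1)) (T (t + 1))) := by
      intro y₁ hy₁ y₂ hy₂ h12
      obtain ⟨s₁, _, hTs₁⟩ := hpre y₁ hy₁
      obtain ⟨s₂, _, hTs₂⟩ := hpre y₂ hy₂
      rw [← hTs₁, ← hTs₂, hST, hST]
      rw [← hTs₁, ← hTs₂] at h12
      exact (hTmono.le_iff_le).mp h12
    refine continuousAt_of_monotoneOn_of_image_mem_nhds hmonoS hs₀ ?_
    have himg : Ioo (t - 1) (t + 1) ⊆ S '' (Ioo (T (t - 1)) (T (t + 1))) := by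
      intro s hs
      exact ⟨T s, ⟨hTmono hs.1, hTmono hs.2⟩, hST s⟩
    have : S (T t) = t := hST t
    rw [this]
    exact mem_of_superset (isOpen_Ioo.mem_nhds ⟨by linarith, by linarith⟩) himg
  -- derivative of the inverse
  have hS : HasDerivAt S (Real.exp (-n * A t))⁻¹ (T t) := by
    refine HasDerivAt.of_local_left_inverse hcontS ?_ (Real.exp_ne_zero _) hTS
    rw [hST t]
    exact hT t
  -- time derivative of u
  have hu1 : Differentiable ℝ (fun s : ℝ => u s x) :=
    (hu.differentiable (by simp)).comp (differentiable_id.prodMk (differentiable_const x))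
  have hud : HasDerivAt (fun s => u s x) (deriv (fun s => u s x) t) t := (hu1 t).hasDerivAt
  set d := deriv (fun s => u s x) t with hd
  -- derivative of w := exp (A ·) * u · x
  set w : ℝ → ℝ := fun s => Real.exp (A s) * u s x with hwdef
  have hw : HasDerivAt w (Real.exp (A t) * α t * u t x + Real.exp (A t) * d) t :=
    ((hA t).exp.mul hud)
  -- derivative of v in time at T t
  have hcomp : HasDerivAt (fun s => w (S s))
      ((Real.exp (A t) * α t * u t x + Real.exp (A t) * d) * (Real.exp (-n * A t))⁻¹) (T t) := by
    have hw' : HasDerivAt w (Real.exp (A t) * α t * u t x + Real.exp (A t) * d) (S (T t)) := by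
      rw [hST t]; exact hw
    simpa [Function.comp_def] using HasDerivAt.comp (T t) hw' hS
  have hveq : (fun s => v s x) =ᶠ[𝓝 (T t)] (fun s => w (S s)) := by
    filter_upwards [hs₀] with y hy
    obtain ⟨s, _, hTs⟩ := hpre y hy
    rw [← hTs, hST, hv s x]
  have hvd : HasDerivAt (fun s => v s x)
      ((Real.exp (A t) * α t * u t x + Real.exp (A t) * d) * (Real.exp (-n * A t))⁻¹) (T t) :=
    hcomp.congr_of_eventuallyEq hveq
  -- spatial derivatives
  have hfun : (fun y => v (T t) y) = fun y => Real.exp (A t) * u t y := funext (hv t)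
  have h5 : ContDiff ℝ 5 (fun y : ℝ => u t y) :=
    (hu.comp ((contDiff_const (c := t)).prodMk contDiff_id)).of_le (by exact WithTop.coe_le_coe.mpr le_top)
  have key := hsol t x
  have hexp : Real.exp (A t) ^ n = Real.exp (n * A t) := by
    rw [Real.rpow_def_of_pos (Real.exp_pos _), Real.log_exp, mul_comm]
  rw [hvd.deriv, hfun, deriv_const_mul_field, iteratedDeriv_cmul h5 (Real.exp (A t)) x, hv t x,
    hγ t, pos_mul_rpow _ _ _ (Real.exp_pos _), hexp, neg_mul, Real.exp_neg, inv_inv]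
  linear_combination (Real.exp (n * A t) * Real.exp (A t)) * key
end

section
/- Let ε ≠ 0, n > 0, and a be real constants. Suppose φ: I → ℝ is smooth on an open interval I and satisfies ε φ''''' + (φ^n − a/n)φ' − (1/n)φ = 0. Then u(t,x) = t^{−1/n} φ(x − (a/n)·ln t), defined for t > 0 with x − (a/n)ln t ∈ I, satisfies u_t + u^n u_x + ε t^{−1} u_{xxxxx} = 0. -/
section Aux

variable {c d : ℝ} {φ : ℝ → ℝ}

/-- Each iterated derivative of a smooth function on an open interval is smooth there. -/
lemma aux_contDiffOn_iteratedDeriv (hφ : ContDiffOn ℝ (⊤ : ℕ∞) φ (Set.Ioo c d)) (m : ℕ) :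
    ContDiffOn ℝ (⊤ : ℕ∞) (iteratedDeriv m φ) (Set.Ioo c d) := by
  induction m with
  | zero => simpa using hφ
  | succ m ih =>
      rw [iteratedDeriv_succ]
      have h1 : ContDiffOn ℝ (⊤ : ℕ∞) (derivWithin (iteratedDeriv m φ) (Set.Ioo c d)) (Set.Ioo c d) :=
        ih.derivWithin (uniqueDiffOn_Ioo c d) le_rfl
      apply h1.congr
      intro y hy
      exact (derivWithin_of_isOpen isOpen_Ioo hy).symm

lemma aux_hasDerivAt (hφ : ContDiffOn ℝ (⊤ : ℕ∞) φ (Set.Ioo c d)) (m : ℕ) {ω : ℝ}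
    (hω : ω ∈ Set.Ioo c d) :
    HasDerivAt (iteratedDeriv m φ) (iteratedDeriv (m + 1) φ ω) ω := by
  have h := (aux_contDiffOn_iteratedDeriv hφ m).differentiableOn (by norm_num)
  have hdiff : DifferentiableAt ℝ (iteratedDeriv m φ) ω :=
    (h ω hω).differentiableAt (isOpen_Ioo.mem_nhds hω)
  have := hdiff.hasDerivAt
  rwa [show iteratedDeriv (m + 1) φ ω = deriv (iteratedDeriv m φ) ω from by
    rw [iteratedDeriv_succ]]

/-- iterated derivative of `y ↦ C * φ (y - k)` on the shifted interval. -/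
lemma aux_iteratedDeriv_shift (hφ : ContDiffOn ℝ (⊤ : ℕ∞) φ (Set.Ioo c d)) (C k : ℝ) (m : ℕ) :
    ∀ x : ℝ, x - k ∈ Set.Ioo c d →
      iteratedDeriv m (fun y => C * φ (y - k)) x = C * iteratedDeriv m φ (x - k) := by
  induction m with
  | zero => intro x hx; simp
  | succ m ih =>
      intro x hx
      rw [iteratedDeriv_succ]
      have hopen : IsOpen {y : ℝ | y - k ∈ Set.Ioo c d} :=
        isOpen_Ioo.preimage (by fun_prop)
      have hev : (iteratedDeriv m (fun y => C * φ (y - k)))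
          =ᶠ[nhds x] (fun y => C * iteratedDeriv m φ (y - k)) := by
        filter_upwards [hopen.mem_nhds hx] with y hy using ih y hy
      rw [hev.deriv_eq]
      have hinner : HasDerivAt (fun y : ℝ => y - k) 1 x := by
        simpa using (hasDerivAt_id x).sub_const k
      have h2 : HasDerivAt (fun y => iteratedDeriv m φ (y - k))
          (iteratedDeriv (m + 1) φ (x - k) * 1) x := by
        have h2a : HasDerivAt (iteratedDeriv m φ) (iteratedDeriv (m + 1) φ (x - k)) (x - k) :=
          aux_hasDerivAt hφ m hx
        exact h2a.comp x hinner
      have h3 : HasDerivAt (fun y => C * iteratedDeriv m φ (y - k))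
          (C * (iteratedDeriv (m + 1) φ (x - k) * 1)) x := h2.const_mul C
      rw [h3.deriv]; ring

/-- multiplicativity of rpow when the first factor is positive. -/
lemma aux_mul_rpow {c x n : ℝ} (hc : 0 < c) (hn : n ≠ 0) :
    (c * x) ^ n = c ^ n * x ^ n := by
  rcases lt_trichotomy x 0 with hx | hx | hx
  · rw [Real.rpow_def_of_neg (by nlinarith), Real.rpow_def_of_neg hx,
      Real.log_mul hc.ne' hx.ne, Real.rpow_def_of_pos hc, add_mul, Real.exp_add]
    ring
  · subst hx; rw [mul_zero, Real.zero_rpow hn, mul_zero]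
  · exact Real.mul_rpow hc.le hx.le

end Aux

/-- Similarity reduction of `u_t + u^n u_x + ε t^{−1} u_{xxxxx} = 0`: the ansatz
    `u = t^{−1/n} φ(x − (a/n) ln t)` yields a solution whenever `φ` solves the reduced ODE. -/
theorem stmt_10 (ε n a c d : ℝ) (hε : ε ≠ 0) (hn : 0 < n)
    (φ : ℝ → ℝ) (hφ : ContDiffOn ℝ (⊤ : ℕ∞) φ (Set.Ioo c d))
    (hode : ∀ ω ∈ Set.Ioo c d,
      ε * iteratedDeriv 5 φ ω + ((φ ω) ^ n - a / n) * deriv φ ω - 1 / n * φ ω = 0)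
    (u : ℝ → ℝ → ℝ)
    (hu : ∀ t x : ℝ, u t x = t ^ (-1 / n) * φ (x - a / n * Real.log t)) :
    ∀ t x : ℝ, 0 < t → x - a / n * Real.log t ∈ Set.Ioo c d →
      deriv (fun s => u s x) t + (u t x) ^ n * deriv (fun y => u t y) x
        + ε * t⁻¹ * iteratedDeriv 5 (fun y => u t y) x = 0 := by
  intro t x ht hω
  set ω := x - a / n * Real.log t with hωdef
  set k := a / n * Real.log t with hkdef
  have hn0 : n ≠ 0 := hn.ne'
  -- the two x-functions
  have hux : (fun y => u t y) = fun y => t ^ (-1 / n) * φ (y - k) := by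
    funext y; rw [hu]
  have hxk : x - k ∈ Set.Ioo c d := hω
  -- first spatial derivative
  have hφ1 : HasDerivAt φ (deriv φ ω) ω := by
    have := aux_hasDerivAt hφ 0 hω
    simpa [iteratedDeriv_one] using this
  have hinner : HasDerivAt (fun y : ℝ => y - k) 1 x := by
    simpa using (hasDerivAt_id x).sub_const k
  have hDx : HasDerivAt (fun y => t ^ (-1 / n) * φ (y - k))
      (t ^ (-1 / n) * (deriv φ ω * 1)) x :=
    ((hφ1.comp x hinner)).const_mul _
  have hderivx : deriv (fun y => u t y) x = t ^ (-1 / n) * deriv φ ω := by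
    rw [hux, hDx.deriv]; ring
  -- fifth spatial derivative
  have h5 : iteratedDeriv 5 (fun y => u t y) x = t ^ (-1 / n) * iteratedDeriv 5 φ ω := by
    rw [hux]
    exact aux_iteratedDeriv_shift hφ _ k 5 x hxk
  -- time derivative
  have hut : (fun s => u s x) = fun s => s ^ (-1 / n) * φ (x - a / n * Real.log s) := by
    funext s; rw [hu]
  have h1 : HasDerivAt (fun s : ℝ => s ^ (-1 / n)) (-1 / n * t ^ (-1 / n - 1)) t :=
    Real.hasDerivAt_rpow_const (Or.inl ht.ne')
  have hlog : HasDerivAt (fun s : ℝ => x - a / n * Real.log s) (-(a / n * t⁻¹)) t := by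
    simpa [mul_comm] using ((Real.hasDerivAt_log ht.ne').const_mul (a / n)).const_sub x
  have h2 : HasDerivAt (fun s : ℝ => φ (x - a / n * Real.log s))
      (deriv φ ω * -(a / n * t⁻¹)) t := hφ1.comp t hlog
  have hDt : HasDerivAt (fun s : ℝ => s ^ (-1 / n) * φ (x - a / n * Real.log s))
      (-1 / n * t ^ (-1 / n - 1) * φ ω + t ^ (-1 / n) * (deriv φ ω * -(a / n * t⁻¹))) t :=
    h1.mul h2
  have hderivt : deriv (fun s => u s x) t
      = -1 / n * t ^ (-1 / n - 1) * φ ω + t ^ (-1 / n) * (deriv φ ω * -(a / n * t⁻¹)) := by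
    rw [hut, hDt.deriv]
  -- rpow algebra
  have hrpow1 : t ^ (-1 / n - 1) = t ^ (-1 / n) * t⁻¹ := by
    rw [Real.rpow_sub ht, Real.rpow_one]; ring
  have hrpow2 : (t ^ (-1 / n) * φ ω) ^ n = t⁻¹ * (φ ω) ^ n := by
    rw [aux_mul_rpow (Real.rpow_pos_of_pos ht _) hn0, ← Real.rpow_mul ht.le]
    have : -1 / n * n = -1 := by field_simp
    rw [this, Real.rpow_neg_one]
  have huval : u t x = t ^ (-1 / n) * φ ω := by rw [hu]
  rw [hderivt, hderivx, h5, huval, hrpow1, hrpow2]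
  have h0 := hode ω hω
  have h0' : ε * iteratedDeriv 5 φ ω = 1 / n * φ ω - ((φ ω) ^ n - a / n) * deriv φ ω := by
    linarith

  linear_combination (t ^ (-1 / n) * t⁻¹) * h0
end

section
/- Let ε ≠ 0 and n > 0. Suppose φ: I → ℝ is smooth on an open interval I and satisfies ε φ''''' + (φ^n − ω/5)φ' + (1/(5n))φ = 0. Then u(t,x) = e^{t/(5n)} φ(x e^{−t/5}), defined for x e^{−t/5} ∈ I, satisfies u_t + u^n u_x + ε e^t u_{xxxxx} = 0. -/
open Real Set

private lemma mul_rpow_of_pos {E b : ℝ} (hE : 0 < E) (n : ℝ) :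
    (E * b) ^ n = E ^ n * b ^ n := by
  rcases le_or_gt 0 b with hb | hb
  · exact Real.mul_rpow hE.le hb
  · have hEb : E * b < 0 := mul_neg_of_pos_of_neg hE hb
    rw [Real.rpow_def_of_neg hEb, Real.rpow_def_of_neg hb, Real.rpow_def_of_pos hE,
      Real.log_mul hE.ne' hb.ne, add_mul, Real.exp_add, mul_assoc]

private lemma diffAt_iteratedDeriv {f : ℝ → ℝ} {s : Set ℝ} (hs : IsOpen s)
    (hf : ContDiffOn ℝ (⊤ : ℕ∞) f s) (k : ℕ) {x : ℝ} (hx : x ∈ s) :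
    DifferentiableAt ℝ (iteratedDeriv k f) x := by
  have h1 : DifferentiableWithinAt ℝ (iteratedDerivWithin k f s) s x :=
    hf.differentiableOn_iteratedDerivWithin (by exact_mod_cast WithTop.coe_lt_top _)
      hs.uniqueDiffOn x hx
  have h2 : ∀ y ∈ s, iteratedDerivWithin k f s y = iteratedDeriv k f y := by
    intro y hy
    rw [iteratedDerivWithin_eq_iteratedFDerivWithin, iteratedDeriv_eq_iteratedFDeriv,
      iteratedFDerivWithin_of_isOpen k hs hy]
  have heq : iteratedDeriv k f =ᶠ[nhds x] iteratedDerivWithin k f s :=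
    Filter.eventuallyEq_of_mem (hs.mem_nhds hx) fun y hy => (h2 y hy).symm
  exact (h1.differentiableAt (hs.mem_nhds hx)).congr_of_eventuallyEq heq

private lemma iteratedDeriv_scale {f : ℝ → ℝ} {s : Set ℝ} (hs : IsOpen s)
    (hf : ContDiffOn ℝ (⊤ : ℕ∞) f s) (C a : ℝ) (k : ℕ) :
    ∀ x : ℝ, x * a ∈ s → iteratedDeriv k (fun y => C * f (y * a)) x
      = C * a ^ k * iteratedDeriv k f (x * a) := by
  induction k with
  | zero => intro x hx; simp
  | succ k ih =>
    intro x hx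
    have hU : IsOpen ((fun y : ℝ => y * a) ⁻¹' s) :=
      hs.preimage (continuous_id.mul continuous_const)
    rw [iteratedDeriv_succ]
    have heq : iteratedDeriv k (fun y => C * f (y * a))
        =ᶠ[nhds x] fun y => C * a ^ k * iteratedDeriv k f (y * a) :=
      Filter.eventuallyEq_of_mem (hU.mem_nhds hx) fun y hy => ih y hy
    rw [heq.deriv_eq]
    have hd : HasDerivAt (fun y : ℝ => iteratedDeriv k f (y * a))
        (deriv (iteratedDeriv k f) (x * a) * a) x :=
      by have := (diffAt_iteratedDeriv hs hf k hx).hasDerivAt.comp x (hasDerivAt_mul_const a); exact this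
    rw [(hd.const_mul (C * a ^ k)).deriv, ← iteratedDeriv_succ]
    ring

/-- Similarity reduction of `u_t + u^n u_x + ε e^t u_{xxxxx} = 0`: the ansatz
    `u = e^{t/(5n)} φ(x e^{−t/5})` yields a solution whenever `φ` solves the reduced ODE. -/
theorem stmt_13 (ε n c d : ℝ) (hε : ε ≠ 0) (hn : 0 < n)
    (φ : ℝ → ℝ) (hφ : ContDiffOn ℝ (⊤ : ℕ∞) φ (Set.Ioo c d))
    (hode : ∀ ω ∈ Set.Ioo c d,
      ε * iteratedDeriv 5 φ ω + ((φ ω) ^ n - ω / 5) * deriv φ ω + 1 / (5 * n) * φ ω = 0)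
    (u : ℝ → ℝ → ℝ)
    (hu : ∀ t x : ℝ, u t x = Real.exp (t / (5 * n)) * φ (x * Real.exp (-t / 5))) :
    ∀ t x : ℝ, x * Real.exp (-t / 5) ∈ Set.Ioo c d →
      deriv (fun s => u s x) t + (u t x) ^ n * deriv (fun y => u t y) x
        + ε * Real.exp t * iteratedDeriv 5 (fun y => u t y) x = 0 := by
  intro t x hω
  set ω : ℝ := x * Real.exp (-t / 5) with hωdef
  have hsO : IsOpen (Set.Ioo c d) := isOpen_Ioo
  have hφω : DifferentiableAt ℝ φ ω := by
    simpa using diffAt_iteratedDeriv hsO hφ 0 hω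
  have hφd : HasDerivAt φ (deriv φ ω) ω := hφω.hasDerivAt
  -- time derivative
  have hinner : HasDerivAt (fun s : ℝ => x * Real.exp (-s / 5))
      (x * (Real.exp (-t / 5) * (-1 / 5))) t := by
    have h1 : HasDerivAt (fun s : ℝ => -s / 5) (-1 / 5) t := by
      simpa using ((hasDerivAt_id t).neg.div_const 5)
    exact (h1.exp).const_mul x
  have hE : HasDerivAt (fun s : ℝ => Real.exp (s / (5 * n)))
      (Real.exp (t / (5 * n)) * (1 / (5 * n))) t := by
    have h1 : HasDerivAt (fun s : ℝ => s / (5 * n)) (1 / (5 * n)) t := by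
      simpa using ((hasDerivAt_id t).div_const (5 * n))
    exact h1.exp
  have hcomp : HasDerivAt (fun s : ℝ => φ (x * Real.exp (-s / 5)))
      (deriv φ ω * (x * (Real.exp (-t / 5) * (-1 / 5)))) t := hφd.comp t hinner
  have ht : deriv (fun s => u s x) t
      = Real.exp (t / (5 * n)) * (1 / (5 * n)) * φ ω
        + Real.exp (t / (5 * n)) * (deriv φ ω * (x * (Real.exp (-t / 5) * (-1 / 5)))) := by
    simp only [hu]
    exact (hE.mul hcomp).deriv
  -- space derivative
  have hx : deriv (fun y => u t y) x
      = Real.exp (t / (5 * n)) * (deriv φ ω * Real.exp (-t / 5)) := by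
    simp only [hu]
    exact (((hφd.comp x (hasDerivAt_mul_const (Real.exp (-t / 5))))).const_mul
      (Real.exp (t / (5 * n)))).deriv
  -- fifth derivative
  have h5 : iteratedDeriv 5 (fun y => u t y) x
      = Real.exp (t / (5 * n)) * Real.exp (-t / 5) ^ (5 : ℕ) * iteratedDeriv 5 φ ω := by
    simp only [hu]
    exact iteratedDeriv_scale hsO hφ (Real.exp (t / (5 * n))) (Real.exp (-t / 5)) 5 x hω
  -- power
  have hpow : (u t x) ^ n = Real.exp (t / 5) * (φ ω) ^ n := by
    rw [hu, mul_rpow_of_pos (Real.exp_pos _) n, ← Real.exp_mul]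
    congr 2
    field_simp
  have hA5 : Real.exp (-t / 5) ^ (5 : ℕ) = Real.exp (-t) := by
    rw [← Real.exp_nat_mul]; norm_num; ring_nf
  have hPA : Real.exp (t / 5) * Real.exp (-t / 5) = 1 := by
    rw [← Real.exp_add]; ring_nf; norm_num [Real.exp_zero]
  have hBA : Real.exp t * Real.exp (-t) = 1 := by
    rw [← Real.exp_add]; ring_nf; norm_num [Real.exp_zero]
  have key := hode ω hω
  rw [ht, hx, h5, hpow, hA5]
  linear_combination Real.exp (t / (5 * n)) * key
    + Real.exp (t / (5 * n)) * (φ ω) ^ n * deriv φ ω * hPA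
    + ε * Real.exp (t / (5 * n)) * iteratedDeriv 5 φ ω * hBA
end

section
/- Let n > 0 and let α: ℝ → ℝ be a smooth nonvanishing function with antiderivative A, and set β(t) = ε e^{−nA(t)} with ε ≠ 0 such that the relevant n-th root exists. Then the function u(t,x) = (−8ε(n+1)(n+2)(n+4)(3n+4))^{1/n} (nx)^{−4/n} e^{−A(t)}, defined for x > 0, satisfies u_t + u^n u_x + α(t)u + β(t)u_{xxxxx} = 0. -/
lemma rpow_step (n c p : ℝ) (hn : 0 < n) (f : ℝ → ℝ)
    (hf : ∀ x, 0 < x → f x = c * (n * x) ^ p) :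
    ∀ x, 0 < x → deriv f x = (c * (n * p)) * (n * x) ^ (p - 1) := by
  intro x hx
  have hnx : 0 < n * x := mul_pos hn hx
  have hloc : f =ᶠ[nhds x] fun y => c * (n * y) ^ p := by
    filter_upwards [Ioi_mem_nhds hx] with y hy using hf y hy
  rw [hloc.deriv_eq]
  have h1 : HasDerivAt (fun y : ℝ => (n * y) ^ p) (p * (n * x) ^ (p - 1) * n) x := by
    have := (Real.hasDerivAt_rpow_const (x := n * x) (p := p) (Or.inl hnx.ne')).comp x
      ((hasDerivAt_id x).const_mul n)
    simp only [mul_one] at this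
    exact this
  rw [(h1.const_mul c).deriv]; ring

/-- Exact nonstationary solution of the variable-coefficient fifth-order KdV equation
    `u_t + u^n u_x + α(t)u + ε e^{−nA(t)} u_{xxxxx} = 0` on the domain `x > 0`. -/
theorem stmt_16 (n ε : ℝ) (hn : 0 < n) (hε : ε ≠ 0)
    (hpos : 0 < -8 * ε * (n + 1) * (n + 2) * (n + 4) * (3 * n + 4))
    (α A : ℝ → ℝ) (hα : ContDiff ℝ (⊤ : ℕ∞) α) (hα0 : ∀ t, α t ≠ 0)
    (hA : ∀ t, HasDerivAt A (α t) t)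
    (β : ℝ → ℝ) (hβ : ∀ t, β t = ε * Real.exp (-n * A t))
    (u : ℝ → ℝ → ℝ)
    (hu : ∀ t x : ℝ, u t x =
      (-8 * ε * (n + 1) * (n + 2) * (n + 4) * (3 * n + 4)) ^ (1 / n)
        * (n * x) ^ (-4 / n) * Real.exp (-A t)) :
    ∀ t x : ℝ, 0 < x →
      deriv (fun s => u s x) t + (u t x) ^ n * deriv (fun y => u t y) x
        + α t * u t x + β t * iteratedDeriv 5 (fun y => u t y) x = 0 := by
  intro t x hx
  have hn0 : n ≠ 0 := hn.ne'
  set K : ℝ := -8 * ε * (n + 1) * (n + 2) * (n + 4) * (3 * n + 4) with hKdef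
  have hK : 0 < K := hpos
  set p : ℝ := -4 / n with hpdef
  set C : ℝ := K ^ (1 / n) with hCdef
  have hnx : 0 < n * x := mul_pos hn hx
  have hC : 0 < C := Real.rpow_pos_of_pos hK _
  -- time derivative
  have htfun : (fun s => u s x) = fun s => (C * (n * x) ^ p) * Real.exp (-A s) := by
    funext s; rw [hu s x]
  have htd : deriv (fun s => u s x) t = -(α t) * u t x := by
    rw [htfun]
    have h1 : HasDerivAt (fun s => Real.exp (-A s)) (Real.exp (-A t) * (-α t)) t :=
      ((hA t).neg).exp
    rw [(h1.const_mul _).deriv, hu t x]; ring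
  -- space derivatives
  set f : ℝ → ℝ := fun y => u t y with hfdef
  set c : ℝ := C * Real.exp (-A t) with hcdef
  have h0 : ∀ y, 0 < y → f y = c * (n * y) ^ p := by
    intro y hy; show u t y = _; rw [hu t y]; ring
  have h1 := rpow_step n c p hn f h0
  have h2 := rpow_step n (c * (n * p)) (p - 1) hn (deriv f) h1
  have h3 := rpow_step n (c * (n * p) * (n * (p - 1))) (p - 1 - 1) hn _ h2
  have h4 := rpow_step n (c * (n * p) * (n * (p - 1)) * (n * (p - 1 - 1))) (p - 1 - 1 - 1) hn _ h3
  have h5 := rpow_step n (c * (n * p) * (n * (p - 1)) * (n * (p - 1 - 1)) * (n * (p - 1 - 1 - 1)))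
    (p - 1 - 1 - 1 - 1) hn _ h4
  have hit : iteratedDeriv 5 f x =
      (c * (n * p) * (n * (p - 1)) * (n * (p - 1 - 1)) * (n * (p - 1 - 1 - 1))
        * (n * (p - 1 - 1 - 1 - 1))) * (n * x) ^ (p - 1 - 1 - 1 - 1 - 1) := by
    have : iteratedDeriv 5 f = deriv (deriv (deriv (deriv (deriv f)))) := by
      simp [iteratedDeriv_succ, iteratedDeriv_zero]
    rw [this, h5 x hx]
  -- u^n
  have hupos : 0 < u t x := by
    rw [hu t x]
    exact mul_pos (mul_pos hC (Real.rpow_pos_of_pos hnx _)) (Real.exp_pos _)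
  have hupow : (u t x) ^ n = K * (n * x) ^ (-4 : ℝ) * Real.exp (-n * A t) := by
    rw [hu t x]
    rw [Real.mul_rpow (by positivity) (Real.exp_pos _).le,
        Real.mul_rpow (by positivity) (by positivity)]
    rw [← Real.rpow_mul hK.le, one_div, inv_mul_cancel₀ hn0, Real.rpow_one,
        ← Real.rpow_mul hnx.le, ← Real.exp_mul]
    have hpn : p * n = -4 := by rw [hpdef]; field_simp
    have hAe : -A t * n = -n * A t := by ring
    rw [hpn, hAe]
  have key : K * (n * p) + ε * ((n * p) * (n * (p - 1)) * (n * (p - 1 - 1))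
      * (n * (p - 1 - 1 - 1)) * (n * (p - 1 - 1 - 1 - 1))) = 0 := by
    rw [hpdef, hKdef]; field_simp; ring
  have hmul : (n * x) ^ (-4 : ℝ) * (n * x) ^ (p - 1) = (n * x) ^ (p - 1 - 1 - 1 - 1 - 1) := by
    rw [← Real.rpow_add hnx]; congr 1; ring
  rw [htd, hβ t, hit, hupow, h1 x hx]
  linear_combination (c * Real.exp (-n * A t) * (n * x) ^ (p - 1 - 1 - 1 - 1 - 1)) * key
    + (K * (n * p) * c * Real.exp (-n * A t)) * hmul
end

section
/- Let ε < 0 and let α: ℝ → ℝ be a smooth function with antiderivative A, and let B be an antiderivative of e^{−2A}. Then u(t,x) = ±2√(−10ε)·(3 tanh(x + 24ε B(t))² − 2)·e^{−A(t)} satisfies u_t + u² u_x + α(t)u + ε e^{−2A(t)} u_{xxxxx} = 0 on ℝ². -/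
lemma tanh_hasDerivAt (x : ℝ) : HasDerivAt Real.tanh (1 - Real.tanh x ^ 2) x := by
  have hc : Real.cosh x ≠ 0 := (Real.cosh_pos x).ne'
  have h := (Real.hasDerivAt_sinh x).div (Real.hasDerivAt_cosh x) hc
  have he : ∀ y : ℝ, Real.tanh y = Real.sinh y / Real.cosh y := fun y =>
    Real.tanh_eq_sinh_div_cosh y
  rw [show (Real.sinh / Real.cosh) = Real.tanh from (funext fun y => (he y).symm)] at h
  refine h.congr_deriv (Eq.symm ?_)
  rw [he x]
  have h1 : Real.cosh x ^ 2 - Real.sinh x ^ 2 = 1 := Real.cosh_sq_sub_sinh_sq x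
  field_simp

lemma poly_hasDerivAt (a b c d e f g h T : ℝ) :
    HasDerivAt (fun T : ℝ => a*T^7+b*T^6+c*T^5+d*T^4+e*T^3+f*T^2+g*T+h)
      (7*a*T^6+6*b*T^5+5*c*T^4+4*d*T^3+3*e*T^2+2*f*T+g) T := by
  have h7 := ((hasDerivAt_pow 7 T).const_mul a)
  have h6 := ((hasDerivAt_pow 6 T).const_mul b)
  have h5 := ((hasDerivAt_pow 5 T).const_mul c)
  have h4 := ((hasDerivAt_pow 4 T).const_mul d)
  have h3 := ((hasDerivAt_pow 3 T).const_mul e)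
  have h2 := ((hasDerivAt_pow 2 T).const_mul f)
  have h1 := ((hasDerivAt_pow 1 T).const_mul g)
  have := ((((((h7.add h6).add h5).add h4).add h3).add h2).add h1).add_const h
  convert this using 1
  · rfl
  · rfl
  · ext y; simp only [Pi.add_apply]; ring
  · push_cast; ring

lemma poly_hasDerivAt' (a b c d e f g h T D : ℝ) (p : ℝ → ℝ)
    (hp : ∀ y, p y = a*y^7+b*y^6+c*y^5+d*y^4+e*y^3+f*y^2+g*y+h)
    (hD : D = 7*a*T^6+6*b*T^5+5*c*T^4+4*d*T^3+3*e*T^2+2*f*T+g) :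
    HasDerivAt p D T := by
  rw [funext hp, hD]; exact poly_hasDerivAt a b c d e f g h T

lemma key (c k x : ℝ) (p q : ℝ → ℝ) (hpq : ∀ T : ℝ, HasDerivAt p (q T) T) :
    HasDerivAt (fun y => c * p (Real.tanh (y + k)))
      (c * (q (Real.tanh (x + k)) * (1 - Real.tanh (x + k) ^ 2))) x := by
  have h1 : HasDerivAt (fun y : ℝ => y + k) 1 x := (hasDerivAt_id x).add_const k
  have h2 := (tanh_hasDerivAt (x + k)).comp x h1
  have h3 := (hpq (Real.tanh (x + k))).comp x h2
  have := h3.const_mul c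
  convert this using 1
  · rfl
  · rfl
  · rfl
  ring

lemma chain_deriv (c k : ℝ) :
    (deriv (fun y => c * (3*Real.tanh (y+k)^2 - 2))
      = fun y => c * (6*Real.tanh (y+k) - 6*Real.tanh (y+k)^3)) ∧
    (∀ x, iteratedDeriv 5 (fun y => c * (3*Real.tanh (y+k)^2 - 2)) x
      = c * (-2160*Real.tanh (x+k)^7 + 5040*Real.tanh (x+k)^5
          - 3696*Real.tanh (x+k)^3 + 816*Real.tanh (x+k))) := by
  have d01 : deriv (fun y => c * (3*Real.tanh (y+k)^2 - 2))
      = fun y => c * (6*Real.tanh (y+k) - 6*Real.tanh (y+k)^3) := by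
    funext y
    rw [(key c k y (fun T => 3*T^2 - 2) (fun T => 6*T)
      (fun T => poly_hasDerivAt' 0 0 0 0 0 3 0 (-2) T (6*T) _ (fun z => by ring) (by ring))).deriv]
    ring
  have d12 : deriv (fun y => c * (6*Real.tanh (y+k) - 6*Real.tanh (y+k)^3))
      = fun y => c * (18*Real.tanh (y+k)^4 - 24*Real.tanh (y+k)^2 + 6) := by
    funext y
    rw [(key c k y (fun T => 6*T - 6*T^3) (fun T => 6 - 18*T^2)
      (fun T => poly_hasDerivAt' 0 0 0 0 (-6) 0 6 0 T (6 - 18*T^2) _ (fun z => by ring)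
        (by ring))).deriv]
    ring
  have d23 : deriv (fun y => c * (18*Real.tanh (y+k)^4 - 24*Real.tanh (y+k)^2 + 6))
      = fun y => c * (-72*Real.tanh (y+k)^5 + 120*Real.tanh (y+k)^3 - 48*Real.tanh (y+k)) := by
    funext y
    rw [(key c k y (fun T => 18*T^4 - 24*T^2 + 6) (fun T => 72*T^3 - 48*T)
      (fun T => poly_hasDerivAt' 0 0 0 18 0 (-24) 0 6 T (72*T^3 - 48*T) _ (fun z => by ring)
        (by ring))).deriv]
    ring
  have d34 : deriv (fun y => c * (-72*Real.tanh (y+k)^5 + 120*Real.tanh (y+k)^3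
        - 48*Real.tanh (y+k)))
      = fun y => c * (360*Real.tanh (y+k)^6 - 720*Real.tanh (y+k)^4
        + 408*Real.tanh (y+k)^2 - 48) := by
    funext y
    rw [(key c k y (fun T => -72*T^5 + 120*T^3 - 48*T) (fun T => -360*T^4 + 360*T^2 - 48)
      (fun T => poly_hasDerivAt' 0 0 (-72) 0 120 0 (-48) 0 T (-360*T^4 + 360*T^2 - 48) _
        (fun z => by ring) (by ring))).deriv]
    ring
  have d45 : deriv (fun y => c * (360*Real.tanh (y+k)^6 - 720*Real.tanh (y+k)^4
        + 408*Real.tanh (y+k)^2 - 48))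
      = fun y => c * (-2160*Real.tanh (y+k)^7 + 5040*Real.tanh (y+k)^5
          - 3696*Real.tanh (y+k)^3 + 816*Real.tanh (y+k)) := by
    funext y
    rw [(key c k y (fun T => 360*T^6 - 720*T^4 + 408*T^2 - 48)
      (fun T => 2160*T^5 - 2880*T^3 + 816*T)
      (fun T => poly_hasDerivAt' 0 360 0 (-720) 0 408 0 (-48) T (2160*T^5 - 2880*T^3 + 816*T) _
        (fun z => by ring) (by ring))).deriv]
    ring
  refine ⟨d01, fun x => ?_⟩
  have e1 : iteratedDeriv 1 (fun y => c * (3*Real.tanh (y+k)^2 - 2))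
      = fun y => c * (6*Real.tanh (y+k) - 6*Real.tanh (y+k)^3) := by
    rw [iteratedDeriv_one, d01]
  have e2 : iteratedDeriv 2 (fun y => c * (3*Real.tanh (y+k)^2 - 2))
      = fun y => c * (18*Real.tanh (y+k)^4 - 24*Real.tanh (y+k)^2 + 6) := by
    have h : iteratedDeriv 2 (fun y => c * (3*Real.tanh (y+k)^2 - 2))
        = deriv (iteratedDeriv 1 (fun y => c * (3*Real.tanh (y+k)^2 - 2))) :=
      iteratedDeriv_succ
    rw [h, e1, d12]
  have e3 : iteratedDeriv 3 (fun y => c * (3*Real.tanh (y+k)^2 - 2))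
      = fun y => c * (-72*Real.tanh (y+k)^5 + 120*Real.tanh (y+k)^3 - 48*Real.tanh (y+k)) := by
    have h : iteratedDeriv 3 (fun y => c * (3*Real.tanh (y+k)^2 - 2))
        = deriv (iteratedDeriv 2 (fun y => c * (3*Real.tanh (y+k)^2 - 2))) :=
      iteratedDeriv_succ
    rw [h, e2, d23]
  have e4 : iteratedDeriv 4 (fun y => c * (3*Real.tanh (y+k)^2 - 2))
      = fun y => c * (360*Real.tanh (y+k)^6 - 720*Real.tanh (y+k)^4
          + 408*Real.tanh (y+k)^2 - 48) := by
    have h : iteratedDeriv 4 (fun y => c * (3*Real.tanh (y+k)^2 - 2))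
        = deriv (iteratedDeriv 3 (fun y => c * (3*Real.tanh (y+k)^2 - 2))) :=
      iteratedDeriv_succ
    rw [h, e3, d34]
  have e5 : iteratedDeriv 5 (fun y => c * (3*Real.tanh (y+k)^2 - 2))
      = deriv (iteratedDeriv 4 (fun y => c * (3*Real.tanh (y+k)^2 - 2))) :=
    iteratedDeriv_succ
  rw [e5, e4, d45]

/-- Exact solutions (both signs) of the variable-coefficient fifth-order KdV equation with
    `n = 2`: `u_t + u² u_x + α(t)u + ε e^{−2A(t)} u_{xxxxx} = 0`, where `A' = α`, `B' = e^{−2A}`. -/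
theorem stmt_17 (ε : ℝ) (hε : ε < 0)
    (α A B : ℝ → ℝ) (hα : ContDiff ℝ (⊤ : ℕ∞) α)
    (hA : ∀ t, HasDerivAt A (α t) t)
    (hB : ∀ t, HasDerivAt B (Real.exp (-2 * A t)) t)
    (sgn : ℝ) (hsgn : sgn = 1 ∨ sgn = -1)
    (u : ℝ → ℝ → ℝ)
    (hu : ∀ t x : ℝ, u t x =
      sgn * 2 * Real.sqrt (-10 * ε) * (3 * (Real.tanh (x + 24 * ε * B t)) ^ 2 - 2)
        * Real.exp (-A t)) :
    ∀ t x : ℝ,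
      deriv (fun s => u s x) t + (u t x) ^ 2 * deriv (fun y => u t y) x
        + α t * u t x + ε * Real.exp (-2 * A t) * iteratedDeriv 5 (fun y => u t y) x = 0 := by
  intro t x
  obtain ⟨dx, d5⟩ := chain_deriv (sgn * 2 * Real.sqrt (-10*ε) * Real.exp (-A t)) (24*ε*B t)
  -- spatial function rewrite
  have h0 : (fun y => u t y)
      = fun y => (sgn * 2 * Real.sqrt (-10*ε) * Real.exp (-A t))
          * (3*Real.tanh (y + 24*ε*B t)^2 - 2) := by
    funext y; rw [hu]; ring
  -- time derivative
  have ht : HasDerivAt (fun s => u s x)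
      ((sgn * 2 * Real.sqrt (-10*ε)) *
        ((6*Real.tanh (x + 24*ε*B t) * ((1 - Real.tanh (x + 24*ε*B t)^2)
            * (24*ε*Real.exp (-2*A t)))) * Real.exp (-A t)
          + (3*Real.tanh (x + 24*ε*B t)^2 - 2) * (Real.exp (-A t) * (-(α t))))) t := by
    have h1 : HasDerivAt (fun s : ℝ => x + 24*ε*B s) (24*ε*Real.exp (-2*A t)) t := by
      have := ((hB t).const_mul (24*ε)).const_add x
      simpa [mul_assoc] using this
    have h2 := (tanh_hasDerivAt (x + 24*ε*B t)).comp t h1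
    have h3 : HasDerivAt (fun s => 3*Real.tanh (x + 24*ε*B s)^2 - 2)
        (6*Real.tanh (x + 24*ε*B t) * ((1 - Real.tanh (x + 24*ε*B t)^2)
          * (24*ε*Real.exp (-2*A t)))) t := by
      have hp : HasDerivAt (fun T : ℝ => 3*T^2 - 2) (6*Real.tanh (x + 24*ε*B t))
          (Real.tanh (x + 24*ε*B t)) :=
        poly_hasDerivAt' 0 0 0 0 0 3 0 (-2) _ _ _ (fun z => by ring) (by ring)
      exact hp.comp t h2
    have h4 : HasDerivAt (fun s => Real.exp (-A s)) (Real.exp (-A t) * (-(α t))) t :=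
      ((hA t).neg).exp
    have h5 := (h3.mul h4).const_mul (sgn * 2 * Real.sqrt (-10*ε))
    have hfun : (fun s => u s x)
        = fun s => (sgn * 2 * Real.sqrt (-10*ε))
            * ((3*Real.tanh (x + 24*ε*B s)^2 - 2) * Real.exp (-A s)) := by
      funext s; rw [hu]; ring
    rw [hfun]
    convert h5 using 1
    all_goals rfl
  rw [ht.deriv, h0, dx, d5, hu]
  beta_reduce
  have hq : Real.sqrt (-10*ε) ^ 2 = -10*ε := Real.sq_sqrt (by linarith)
  have hE : Real.exp (-2*A t) = Real.exp (-A t) * Real.exp (-A t) := by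
    rw [← Real.exp_add]; congr 1; ring
  have hε2 : ε = -(Real.sqrt (-10*ε)^2)/10 := by rw [hq]; ring
  rw [hE]
  set T := Real.tanh (x + 24*ε*B t) with hT
  set E := Real.exp (-A t) with hEdef
  set q := Real.sqrt (-10*ε) with hqdef
  obtain rfl | rfl := hsgn <;> rw [hε2] <;> try ring
end
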